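/- arXiv:math/0506329 — 4 statements merged into one kernel-verified Lean document; each statement's English description precedes it below -/
import Mathlib

section
/- For ő≤ < 0 and x ‚Č• 0, ‚ąę_0^‚ąě y e^{ő≤ y} dy = 1/ő≤¬≤, and consequently (1/‚ąö(2ŌÄt)) ‚ąę_0^‚ąě (exp(-(x-y)¬≤/(2t)) - exp(-(x+y)¬≤/(2t))) e^{ő≤y} dy ‚Č§ ‚ąö(2/(ŌÄt¬≥)) ¬∑ x/ő≤¬≤. -/
/-!
Writing `u = 2xy/t`, the image term factors as
`exp(-(x+y)²/(2t)) = exp(-(x-y)²/(2t)) · e^{-u}`, so the kernel difference is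
`exp(-(x-y)²/(2t)) (1 - e^{-u}) ∈ [0, u]`. Integrating this bound against `e^{βy}`
leaves the Gamma integral `(2x/t) ∫_0^∞ y e^{βy} dy = 2x/(tβ²)`, and
`2/(t√(2πt)) = √(2/(πt³))`.
-/

open MeasureTheory Real Set

theorem integral_Ioi_mul_exp_of_neg {β : ℝ} (hβ : β < 0) :
    ∫ y in Ioi (0 : ℝ), y * exp (β * y) = 1 / β ^ 2 := by
  have h := integral_rpow_mul_exp_neg_mul_Ioi two_pos (neg_pos.2 hβ)
  norm_num [Gamma_two, neg_mul] at h
  rw [h, one_div]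

theorem integrableOn_Ioi_mul_exp_of_neg {β : ℝ} (hβ : β < 0) :
    IntegrableOn (fun y ↦ y * exp (β * y)) (Ioi 0) :=
  .of_integral_ne_zero <| by
    rw [integral_Ioi_mul_exp_of_neg hβ]
    exact one_div_ne_zero (pow_ne_zero 2 hβ.ne)

theorem exp_neg_add_sq_div_eq (x y t : ℝ) :
    exp (-(x + y) ^ 2 / (2 * t)) = exp (-(x - y) ^ 2 / (2 * t)) * exp (-(2 * x * y / t)) := by
  rw [← exp_add]
  ring_nf

theorem exp_neg_sub_sq_div_sub_exp_neg_add_sq_div_eq (x y t : ℝ) :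
    exp (-(x - y) ^ 2 / (2 * t)) - exp (-(x + y) ^ 2 / (2 * t)) =
      exp (-(x - y) ^ 2 / (2 * t)) * (1 - exp (-(2 * x * y / t))) := by
  rw [exp_neg_add_sq_div_eq]
  ring

theorem one_sub_exp_neg_nonneg {u : ℝ} (hu : 0 ≤ u) : 0 ≤ 1 - exp (-u) := by
  simpa using exp_le_one_iff.2 (neg_nonpos.2 hu)

theorem exp_neg_sub_sq_div_sub_exp_neg_add_sq_div_nonneg {x y t : ℝ}
    (hxy : 0 ≤ x * y) (ht : 0 ≤ t) :
    0 ≤ exp (-(x - y) ^ 2 / (2 * t)) - exp (-(x + y) ^ 2 / (2 * t)) := by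
  rw [exp_neg_sub_sq_div_sub_exp_neg_add_sq_div_eq]
  exact mul_nonneg (exp_nonneg _) (one_sub_exp_neg_nonneg (div_nonneg (by linarith) ht))

theorem exp_neg_sub_sq_div_sub_exp_neg_add_sq_div_le {x y t : ℝ}
    (hxy : 0 ≤ x * y) (ht : 0 ≤ t) :
    exp (-(x - y) ^ 2 / (2 * t)) - exp (-(x + y) ^ 2 / (2 * t)) ≤ 2 * x * y / t := by
  rw [exp_neg_sub_sq_div_sub_exp_neg_add_sq_div_eq]
  have hu : 0 ≤ 2 * x * y / t := div_nonneg (by linarith) ht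
  calc exp (-(x - y) ^ 2 / (2 * t)) * (1 - exp (-(2 * x * y / t)))
      ≤ 1 * (2 * x * y / t) := by
        gcongr
        · exact one_sub_exp_neg_nonneg hu
        · exact exp_le_one_iff.2 <|
            div_nonpos_of_nonpos_of_nonneg (neg_nonpos.2 (sq_nonneg _)) (by linarith)
        · linarith [add_one_le_exp (-(2 * x * y / t))]
    _ = 2 * x * y / t := one_mul _

theorem sqrt_two_div_pi_mul_pow_three {t : ℝ} (ht : 0 < t) :
    √(2 / (π * t ^ 3)) = (√(2 * π * t))⁻¹ * (2 / t) := by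
  rw [show 2 / (π * t ^ 3) = (2 / t) ^ 2 / (2 * π * t) by field_simp,
    sqrt_div' _ (by positivity), sqrt_sq (by positivity), div_eq_inv_mul]

/-- For `β < 0` and `x ≥ 0`, `∫_0^∞ y e^{βy} dy = 1/β²`, and consequently
`(1/√(2πt)) ∫_0^∞ (exp(-(x-y)²/(2t)) - exp(-(x+y)²/(2t))) e^{βy} dy ≤ √(2/(πt³)) · x/β²`. -/
theorem stmt_2 (β x t : ℝ) (hβ : β < 0) (hx : 0 ≤ x) (ht : 0 < t) :
    (∫ y in Ioi (0:ℝ), y * Real.exp (β * y)) = 1 / β^2 ∧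
    (Real.sqrt (2 * π * t))⁻¹ *
        ∫ y in Ioi (0:ℝ),
          (Real.exp (-(x - y)^2 / (2*t)) - Real.exp (-(x + y)^2 / (2*t))) * Real.exp (β * y)
      ≤ Real.sqrt (2 / (π * t^3)) * (x / β^2) := by
  refine ⟨integral_Ioi_mul_exp_of_neg hβ, ?_⟩
  have hmono : ∫ y in Ioi (0:ℝ),
      (exp (-(x - y) ^ 2 / (2 * t)) - exp (-(x + y) ^ 2 / (2 * t))) * exp (β * y)
      ≤ ∫ y in Ioi (0:ℝ), 2 * x / t * (y * exp (β * y)) := by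
    have hxy : ∀ y ∈ Ioi (0:ℝ), 0 ≤ x * y := fun y hy ↦ mul_nonneg hx (le_of_lt hy)
    refine integral_mono_of_nonneg (ae_restrict_of_forall_mem measurableSet_Ioi fun y hy ↦ ?_)
      ((integrableOn_Ioi_mul_exp_of_neg hβ).const_mul _)
      (ae_restrict_of_forall_mem measurableSet_Ioi fun y hy ↦ ?_)
    · exact mul_nonneg (exp_neg_sub_sq_div_sub_exp_neg_add_sq_div_nonneg (hxy y hy) ht.le)
        (exp_nonneg _)
    · calc _ ≤ 2 * x * y / t * exp (β * y) := mul_le_mul_of_nonneg_right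
            (exp_neg_sub_sq_div_sub_exp_neg_add_sq_div_le (hxy y hy) ht.le) (exp_nonneg _)
        _ = 2 * x / t * (y * exp (β * y)) := by ring
  rw [integral_const_mul, integral_Ioi_mul_exp_of_neg hβ] at hmono
  calc _ ≤ (√(2 * π * t))⁻¹ * (2 * x / t * (1 / β ^ 2)) := by gcongr
    _ = √(2 / (π * t ^ 3)) * (x / β ^ 2) := by
      rw [sqrt_two_div_pi_mul_pow_three ht]; ring
end

section
/- For ő≤ < 0, x ‚Č• 0 and t > 0, the quantity J(ő≤,x,t) = (1/‚ąö(2ŌÄt)) ‚ąę_0^‚ąě (exp(-(x-y)¬≤/(2t)) - exp(-(x+y)¬≤/(2t))) e^{ő≤y} dy satisfies |J(ő≤,x,t) - ‚ąö(2/(ŌÄt¬≥)) x/ő≤¬≤| ‚Č§ C(x) t^{-5/2} for some constant C(x) depending only on x (and ő≤), so that J(ő≤,x,t) ~ ‚ąö(2/(ŌÄt¬≥)) x/ő≤¬≤ as t ‚Üí ‚ąě. -/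
/-
With `u = (x-y)²/(2t)` and `v = (x+y)²/(2t)`, the image kernel `e^{-u} - e^{-v}` is close to its
linearisation `v - u = 2xy/t`, and replacing it by `2xy/t` turns `J(β,x,t)` into
`(2πt)^{-1/2} (2x/t) ∫_0^∞ y e^{βy} dy = √(2/(πt³)) x/β²`. By `1 - u ≤ e^{-u} ≤ 1 - u + u²`
the error in the kernel is at most `u² + v² = O((x⁴ + y⁴)/t²)`, which is integrable against
`e^{βy}` and so contributes `O(t^{-1/2} t^{-2}) = O(t^{-5/2})`. Relative to the main term, of
order `t^{-3/2}`, this is `O(1/t)`, hence the equivalence.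
-/

open MeasureTheory Real Set Filter

/-- `J(β,x,t) = (1/√(2πt)) ∫_0^∞ (exp(-(x-y)²/(2t)) - exp(-(x+y)²/(2t))) e^{βy} dy`. -/
noncomputable def J (β x t : ℝ) : ℝ :=
  (Real.sqrt (2 * π * t))⁻¹ *
    ∫ y in Ioi (0:ℝ),
      (Real.exp (-(x - y)^2 / (2*t)) - Real.exp (-(x + y)^2 / (2*t))) * Real.exp (β * y)

namespace Real

lemma exp_neg_le_one_sub_add_sq {w : ℝ} (hw : 0 ≤ w) : exp (-w) ≤ 1 - w + w ^ 2 := by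
  have h1w : 0 < 1 + w := by linarith
  calc exp (-w) = (exp w)⁻¹ := exp_neg w
    _ ≤ (1 + w)⁻¹ := inv_anti₀ h1w (by linarith [add_one_le_exp w])
    _ ≤ 1 - w + w ^ 2 := by
      rw [inv_le_iff_one_le_mul₀ h1w]
      nlinarith [pow_nonneg hw 3]

lemma abs_exp_neg_sub_exp_neg_sub_le {u v : ℝ} (hu : 0 ≤ u) (hv : 0 ≤ v) :
    |exp (-u) - exp (-v) - (v - u)| ≤ u ^ 2 + v ^ 2 := by
  have := one_sub_le_exp_neg u
  have := one_sub_le_exp_neg v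
  have := exp_neg_le_one_sub_add_sq hu
  have := exp_neg_le_one_sub_add_sq hv
  rw [abs_le]
  constructor <;> nlinarith

end Real

/-- `√(2πt)` times the transition density of Brownian motion killed at `0` (method of images). -/
noncomputable def imageKernel (t x y : ℝ) : ℝ :=
  exp (-(x - y) ^ 2 / (2 * t)) - exp (-(x + y) ^ 2 / (2 * t))

lemma J_eq_integral_imageKernel (β x t : ℝ) :
    J β x t = (√(2 * π * t))⁻¹ * ∫ y in Ioi (0 : ℝ), imageKernel t x y * exp (β * y) :=
  rfl

lemma abs_imageKernel_le_one (x y : ℝ) {t : ℝ} (ht : 0 ≤ t) : |imageKernel t x y| ≤ 1 := by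
  have hexp_le_one (z : ℝ) : exp (-z ^ 2 / (2 * t)) ≤ 1 :=
    exp_le_one_iff.mpr (div_nonpos_of_nonpos_of_nonneg (by nlinarith) (by positivity))
  rw [imageKernel, abs_le]
  constructor <;> linarith [hexp_le_one (x - y), hexp_le_one (x + y),
    exp_pos (-(x - y) ^ 2 / (2 * t)), exp_pos (-(x + y) ^ 2 / (2 * t))]

lemma abs_imageKernel_sub_le (x y : ℝ) {t : ℝ} (ht : 0 ≤ t) :
    |imageKernel t x y - 2 * x * y / t| ≤ 2 * (x ^ 4 + y ^ 4) / t ^ 2 := by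
  have key := abs_exp_neg_sub_exp_neg_sub_le (u := (x - y) ^ 2 / (2 * t))
    (v := (x + y) ^ 2 / (2 * t)) (by positivity) (by positivity)
  have hsq : ((x - y) ^ 2 / (2 * t)) ^ 2 + ((x + y) ^ 2 / (2 * t)) ^ 2
      = (x ^ 4 + 6 * x ^ 2 * y ^ 2 + y ^ 4) / (2 * t ^ 2) := by ring
  have hquartic : x ^ 4 + 6 * x ^ 2 * y ^ 2 + y ^ 4 ≤ 4 * (x ^ 4 + y ^ 4) := by
    nlinarith [sq_nonneg (x ^ 2 - y ^ 2)]
  calc |imageKernel t x y - 2 * x * y / t|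
      = |exp (-((x - y) ^ 2 / (2 * t))) - exp (-((x + y) ^ 2 / (2 * t)))
          - ((x + y) ^ 2 / (2 * t) - (x - y) ^ 2 / (2 * t))| := by
        rw [imageKernel]; ring_nf
    _ ≤ (x ^ 4 + 6 * x ^ 2 * y ^ 2 + y ^ 4) / (2 * t ^ 2) := hsq ▸ key
    _ ≤ 4 * (x ^ 4 + y ^ 4) / (2 * t ^ 2) := by gcongr
    _ = 2 * (x ^ 4 + y ^ 4) / t ^ 2 := by ring

section ExpMoments

variable {β : ℝ}

lemma integrableOn_Ioi_pow_mul_exp (hβ : β < 0) (n : ℕ) :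
    IntegrableOn (fun y : ℝ => y ^ n * exp (β * y)) (Ioi 0) := by
  have h := integrableOn_rpow_mul_exp_neg_mul_rpow (s := n) (p := 1)
    (by linarith [(Nat.cast_nonneg n : (0 : ℝ) ≤ n)]) one_pos (neg_pos.mpr hβ)
  simpa only [rpow_natCast, rpow_one, neg_neg] using h

lemma integral_Ioi_mul_exp (hβ : β < 0) :
    ∫ y in Ioi (0 : ℝ), y * exp (β * y) = 1 / β ^ 2 := by
  have h := integral_rpow_mul_exp_neg_mul_Ioi (a := 2) two_pos (neg_pos.mpr hβ)
  norm_num only [rpow_one, rpow_two, neg_mul, neg_neg, Gamma_two, mul_one, one_div, inv_pow] at h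
  rw [h, one_div, neg_sq]

end ExpMoments

section ErrorBound

variable {β t : ℝ}

lemma integrableOn_imageKernel_mul_exp (hβ : β < 0) (x : ℝ) (ht : 0 ≤ t) :
    IntegrableOn (fun y => imageKernel t x y * exp (β * y)) (Ioi 0) := by
  have hcont : Continuous fun y => imageKernel t x y * exp (β * y) := by
    unfold imageKernel; fun_prop
  refine (integrableOn_exp_mul_Ioi hβ 0).mono' hcont.aestronglyMeasurable
    (Eventually.of_forall fun y => ?_)
  rw [norm_mul, norm_of_nonneg (exp_pos _).le]
  exact mul_le_of_le_one_left (exp_pos _).le (abs_imageKernel_le_one x y ht)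

lemma sqrt_two_div_pi_mul_cube_eq (ht : 0 < t) :
    √(2 / (π * t ^ 3)) = (√(2 * π * t))⁻¹ * (2 / t) := by
  rw [show 2 / (π * t ^ 3) = (2 / t) ^ 2 / (2 * π * t) by field_simp,
    sqrt_div (sq_nonneg _), sqrt_sq (by positivity), inv_mul_eq_div]

lemma J_sub_eq_integral (hβ : β < 0) (x : ℝ) (ht : 0 < t) :
    J β x t - √(2 / (π * t ^ 3)) * (x / β ^ 2)
      = (√(2 * π * t))⁻¹ *
          ∫ y in Ioi (0 : ℝ), (imageKernel t x y - 2 * x * y / t) * exp (β * y) := by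
  have hmoment : IntegrableOn (fun y => 2 * x / t * (y * exp (β * y))) (Ioi 0) := by
    have h := integrableOn_Ioi_pow_mul_exp hβ 1
    simp only [pow_one] at h
    exact h.const_mul _
  have hsplit : ∫ y in Ioi (0 : ℝ), (imageKernel t x y - 2 * x * y / t) * exp (β * y)
      = (∫ y in Ioi (0 : ℝ), imageKernel t x y * exp (β * y)) - 2 * x / t * (1 / β ^ 2) := by
    rw [← integral_Ioi_mul_exp hβ, ← integral_const_mul,
      ← integral_sub (integrableOn_imageKernel_mul_exp hβ x ht.le) hmoment]
    congr 1 with y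
    ring
  rw [hsplit, J_eq_integral_imageKernel, sqrt_two_div_pi_mul_cube_eq ht]
  ring

lemma abs_J_sub_le (hβ : β < 0) (x : ℝ) (ht : 0 < t) :
    |J β x t - √(2 / (π * t ^ 3)) * (x / β ^ 2)|
      ≤ (√(2 * π))⁻¹ * (2 * ∫ y in Ioi (0 : ℝ), (x ^ 4 + y ^ 4) * exp (β * y)) *
          t ^ (-(5 : ℝ) / 2) := by
  have hquartic : IntegrableOn (fun y => 2 / t ^ 2 * ((x ^ 4 + y ^ 4) * exp (β * y))) (Ioi 0) := by
    have h := ((integrableOn_Ioi_pow_mul_exp hβ 0).const_mul (x ^ 4)).add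
      (integrableOn_Ioi_pow_mul_exp hβ 4)
    refine (h.const_mul (2 / t ^ 2)).congr (Eventually.of_forall fun y => ?_)
    simp only [Pi.add_apply]
    ring
  have hintegral : |∫ y in Ioi (0 : ℝ), (imageKernel t x y - 2 * x * y / t) * exp (β * y)|
      ≤ 2 / t ^ 2 * ∫ y in Ioi (0 : ℝ), (x ^ 4 + y ^ 4) * exp (β * y) := by
    rw [← integral_const_mul, ← norm_eq_abs]
    refine norm_integral_le_of_norm_le hquartic (Eventually.of_forall fun y => ?_)
    rw [norm_mul, norm_of_nonneg (exp_pos _).le]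
    exact (mul_le_mul_of_nonneg_right (abs_imageKernel_sub_le x y ht.le) (exp_pos _).le).trans_eq
      (by ring)
  have hpow : t ^ (-(5 : ℝ) / 2) = (√t)⁻¹ * (t ^ 2)⁻¹ := by
    rw [sqrt_eq_rpow, ← rpow_natCast t 2, ← rpow_neg ht.le, ← rpow_neg ht.le, ← rpow_add ht]
    norm_num
  rw [J_sub_eq_integral hβ x ht, abs_mul, abs_of_nonneg (by positivity)]
  calc _ ≤ (√(2 * π * t))⁻¹ *
          (2 / t ^ 2 * ∫ y in Ioi (0 : ℝ), (x ^ 4 + y ^ 4) * exp (β * y)) := by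
        gcongr
    _ = _ := by
        rw [sqrt_mul (by positivity) t, hpow]
        ring

end ErrorBound

open Asymptotics in
lemma isEquivalent_of_isBigO_inv_mul {f g : ℝ → ℝ}
    (h : (f - g) =O[atTop] fun t => t⁻¹ * g t) : f ~[atTop] g := by
  have hinv : (fun t : ℝ => t⁻¹) =o[atTop] fun _ => (1 : ℝ) :=
    (isLittleO_one_iff ℝ).mpr tendsto_inv_atTop_zero
  exact h.trans_isLittleO (by simpa only [one_mul] using hinv.mul_isBigO (isBigO_refl g atTop))

lemma sqrt_two_div_pi_mul_cube_eq_rpow {t : ℝ} (ht : 0 ≤ t) :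
    √(2 / (π * t ^ 3)) = √(2 / π) * t ^ (-(3 : ℝ) / 2) := by
  rw [div_mul_eq_div_div, sqrt_div' _ (by positivity), div_eq_mul_inv]
  congr 1
  rw [sqrt_eq_rpow, ← rpow_natCast, ← rpow_mul ht, ← rpow_neg ht]
  norm_num

/-- For `β < 0` and `x ≥ 0`, `|J(β,x,t) - √(2/(πt³)) x/β²| ≤ C(x) t^{-5/2}` for some constant
`C(x)` depending only on `x` (and `β`), so that `J(β,x,t) ~ √(2/(πt³)) x/β²` as `t → ∞`. -/
theorem stmt_3 (β x : ℝ) (hβ : β < 0) (hx : 0 ≤ x) :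
    ∃ C : ℝ, (∀ t : ℝ, 0 < t →
        |J β x t - Real.sqrt (2 / (π * t^3)) * (x / β^2)| ≤ C * t ^ (-(5:ℝ)/2)) ∧
      Asymptotics.IsEquivalent atTop (fun t => J β x t) (fun t => Real.sqrt (2 / (π * t^3)) * (x / β^2)) := by
  set C := (√(2 * π))⁻¹ * (2 * ∫ y in Ioi (0 : ℝ), (x ^ 4 + y ^ 4) * exp (β * y))
  refine ⟨C, fun t ht => abs_J_sub_le hβ x ht, ?_⟩
  rcases hx.eq_or_lt with rfl | hx
  · have hJ : (fun t => J β 0 t) = fun t => √(2 / (π * t ^ 3)) * (0 / β ^ 2) := by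
      ext t
      simp [J]
    exact hJ ▸ Asymptotics.IsEquivalent.refl
  set c := √(2 / π) * (x / β ^ 2)
  have hc : 0 < c := by have := hβ.ne; positivity
  refine isEquivalent_of_isBigO_inv_mul (Asymptotics.IsBigO.of_bound (C / c) ?_)
  filter_upwards [eventually_gt_atTop 0] with t ht
  have hmain : √(2 / (π * t ^ 3)) * (x / β ^ 2) = c * t ^ (-(3 : ℝ) / 2) := by
    rw [sqrt_two_div_pi_mul_cube_eq_rpow ht.le]; ring
  have hpow : t ^ (-(5 : ℝ) / 2) = t⁻¹ * t ^ (-(3 : ℝ) / 2) := by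
    rw [← rpow_neg_one, ← rpow_add ht]; norm_num
  calc ‖J β x t - √(2 / (π * t ^ 3)) * (x / β ^ 2)‖
      ≤ C * t ^ (-(5 : ℝ) / 2) := abs_J_sub_le hβ x ht
    _ = C / c * ‖t⁻¹ * (√(2 / (π * t ^ 3)) * (x / β ^ 2))‖ := by
      rw [hmain, norm_of_nonneg (by positivity), hpow]
      field_simp
end

section
/- For ő≤ > 0, x ‚Č• 0 and t > 0, the identity J(ő≤,x,t) = J(-ő≤,x,t) + 2 sinh(ő≤x) exp(tő≤¬≤/2) holds, where J(ő≤,x,t) = (1/‚ąö(2ŌÄt)) ‚ąę_0^‚ąě (exp(-(x-y)¬≤/(2t)) - exp(-(x+y)¬≤/(2t))) e^{ő≤y} dy. -/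
open MeasureTheory Real Set

lemma gauss_key (t c β : ℝ) (ht : 0 < t) (y : ℝ) :
    Real.exp (-(c - y)^2 / (2*t)) * Real.exp (β * y)
      = Real.exp (β * c + t * β^2 / 2) * Real.exp (-(1/(2*t)) * (y - (c + t*β))^2) := by
  rw [← Real.exp_add, ← Real.exp_add]
  congr 1
  field_simp
  ring

lemma gauss_integrable (t c β : ℝ) (ht : 0 < t) :
    Integrable (fun y => Real.exp (-(c - y)^2 / (2*t)) * Real.exp (β * y)) := by
  have h : (0:ℝ) < 1/(2*t) := by positivity
  have := (((integrable_exp_neg_mul_sq h).comp_sub_right (c + t*β)).const_mul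
    (Real.exp (β * c + t * β^2 / 2)))
  refine this.congr ?_
  filter_upwards with y
  exact (gauss_key t c β ht y).symm

lemma gauss_shift (t c β : ℝ) (ht : 0 < t) :
    ∫ y : ℝ, Real.exp (-(c - y)^2 / (2*t)) * Real.exp (β * y)
      = Real.sqrt (2 * π * t) * Real.exp (β * c + t * β^2 / 2) := by
  simp_rw [gauss_key t c β ht]
  rw [integral_const_mul]
  have : ∫ y : ℝ, Real.exp (-(1/(2*t)) * (y - (c + t*β))^2)
      = ∫ y : ℝ, Real.exp (-(1/(2*t)) * y^2) :=
    integral_sub_right_eq_self (fun y => Real.exp (-(1/(2*t)) * y^2)) (c + t*β)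
  rw [this, integral_gaussian]
  have h2 : π / (1/(2*t)) = 2 * π * t := by field_simp
  rw [h2]; ring

/-- For `β > 0`, `x ≥ 0` and `t > 0`, `J(β,x,t) = J(-β,x,t) + 2 sinh(βx) exp(tβ²/2)`. -/
theorem stmt_4 (β x t : ℝ) (hβ : 0 < β) (hx : 0 ≤ x) (ht : 0 < t) :
    J β x t = J (-β) x t + 2 * Real.sinh (β * x) * Real.exp (t * β^2 / 2) := by
  have hsne : Real.sqrt (2 * π * t) ≠ 0 := by positivity
  set f : ℝ → ℝ := fun y =>
    (Real.exp (-(x - y)^2 / (2*t)) - Real.exp (-(x + y)^2 / (2*t))) * Real.exp (β * y) with hf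
  have h1 := gauss_integrable t x β ht
  have h2 := gauss_integrable t (-x) β ht
  have hcongr : ∀ y : ℝ, Real.exp (-(-x - y)^2 / (2*t)) = Real.exp (-(x + y)^2 / (2*t)) := by
    intro y; congr 1; ring
  have hint : Integrable f := by
    refine (h1.sub h2).congr ?_
    filter_upwards with y
    simp only [hf, Pi.sub_apply, hcongr y]
    ring
  have hfull : ∫ y : ℝ, f y = Real.sqrt (2*π*t) *
      (Real.exp (β*x + t*β^2/2) - Real.exp (β*(-x) + t*β^2/2)) := by
    have : ∫ y : ℝ, f y = (∫ y : ℝ, Real.exp (-(x - y)^2 / (2*t)) * Real.exp (β * y))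
        - ∫ y : ℝ, Real.exp (-(-x - y)^2 / (2*t)) * Real.exp (β * y) := by
      rw [← integral_sub h1 h2]
      congr 1; funext y; simp only [hf, hcongr y]; ring
    rw [this, gauss_shift t x β ht, gauss_shift t (-x) β ht]; ring
  have hIic : ∫ y in Iic (0:ℝ), f y = - ∫ y in Ioi (0:ℝ),
      (Real.exp (-(x - y)^2 / (2*t)) - Real.exp (-(x + y)^2 / (2*t))) * Real.exp ((-β) * y) := by
    have h := integral_comp_neg_Ioi (0:ℝ) f
    rw [neg_zero] at h
    rw [← h, ← integral_neg]
    refine setIntegral_congr_fun measurableSet_Ioi fun y _ => ?_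
    simp only [hf]
    have e1 : Real.exp (-(x - -y)^2 / (2*t)) = Real.exp (-(x + y)^2 / (2*t)) := by
      congr 1; ring
    have e2 : Real.exp (-(x + -y)^2 / (2*t)) = Real.exp (-(x - y)^2 / (2*t)) := by
      norm_num [sub_eq_add_neg]
    have e3 : Real.exp (β * -y) = Real.exp ((-β) * y) := by congr 1; ring
    rw [e1, e2, e3]
    ring_nf
  have hsplit := intervalIntegral.integral_Iic_add_Ioi (b := (0:ℝ)) hint.integrableOn hint.integrableOn
  have hIoi : ∫ y in Ioi (0:ℝ), f y = (∫ y in Ioi (0:ℝ),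
      (Real.exp (-(x - y)^2 / (2*t)) - Real.exp (-(x + y)^2 / (2*t))) * Real.exp ((-β) * y))
      + Real.sqrt (2*π*t) *
        (Real.exp (β*x + t*β^2/2) - Real.exp (β*(-x) + t*β^2/2)) := by
    rw [← hfull, ← hsplit, hIic]; ring
  show (Real.sqrt (2 * π * t))⁻¹ * ∫ y in Ioi (0:ℝ), f y = _
  rw [hIoi, mul_add, inv_mul_cancel_left₀ hsne]
  unfold J
  rw [Real.sinh_eq, Real.exp_add, Real.exp_add]
  simp only [mul_neg, neg_mul]
  ring
end

section
/- For any ŌÜ > 0, x ‚Č• 0 and t > 0, ‚ąö(2/(ŌÄt¬≥)) ‚ąę_0^‚ąě (x+z) exp(-(x+z)¬≤/(2t) + ŌÜz) dz = ‚ąö(2/(ŌÄt)) e^{-x¬≤/(2t)} + 2ŌÜ e^{-ŌÜx + tŌÜ¬≤/2} - ŌÜ ‚ąö(2/(ŌÄt)) ‚ąę_0^‚ąě exp(-(x-z)¬≤/(2t) - ŌÜz) dz, and the last integral is bounded by 1/ŌÜ; hence the left side is at most and asymptotically equivalent to ‚ąö(2/(ŌÄt)) + 2ŌÜ e^{-ŌÜx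 + tŌÜ¬≤/2} as t ‚Üí ‚ąě. -/
/-!
Completing the square, `-(x+z)²/(2t) + φz = -(z - (tφ - x))²/(2t) + (-φx + tφ²/2)`, so the
integrand is a Gaussian of variance `t` times `e^{-φx + tφ²/2}`. Since
`d/dz (-t e^{-(x+z)²/(2t) + φz}) = (x+z) e^{…} - tφ e^{…}`, integrating by parts over `(0, ∞)`
reduces the first moment to the boundary term `t e^{-x²/(2t)}` plus `tφ ∫_0^∞ e^{…}`, and the
latter is the full Gaussian integral `√(2πt) e^{-φx + tφ²/2}` minus its part over `(-∞, 0]`,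
which after `z ↦ -z` is `∫_0^∞ e^{-(x-z)²/(2t) - φz} ≤ ∫_0^∞ e^{-φz} = 1/φ`.
Hence the two sides of the asymptotic equivalence differ by `O(t^{-1/2})`, while the right side
grows like `e^{tφ²/2}`.
-/

open MeasureTheory Real Set Filter
open Topology Asymptotics

section

variable {φ x t : ℝ}

lemma exp_neg_sq_div_add_mul_eq (ht : t ≠ 0) (z : ℝ) :
    exp (-(x + z)^2 / (2*t) + φ * z)
      = exp (-(1/(2*t)) * (z - (t*φ - x))^2) * exp (-φ*x + t*φ^2/2) := by
  rw [← exp_add]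
  congr 1
  field_simp
  ring

lemma integrable_exp_neg_sq_div_add_mul (ht : 0 < t) :
    Integrable fun z => exp (-(x + z)^2 / (2*t) + φ * z) := by
  simp_rw [exp_neg_sq_div_add_mul_eq ht.ne']
  exact ((integrable_exp_neg_mul_sq (by positivity)).comp_sub_right _).mul_const _

lemma integrable_add_mul_exp_neg_sq_div_add_mul (ht : 0 < t) :
    Integrable fun z => (x + z) * exp (-(x + z)^2 / (2*t) + φ * z) := by
  have hb : 0 < 1/(2*t) := by positivity
  have h := ((integrable_mul_exp_neg_mul_sq hb).comp_sub_right (t*φ - x)).add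
    (((integrable_exp_neg_mul_sq hb).comp_sub_right (t*φ - x)).const_mul (t*φ))
  refine (h.mul_const (exp (-φ*x + t*φ^2/2))).congr (ae_of_all _ fun z => ?_)
  simp only [Pi.add_apply, exp_neg_sq_div_add_mul_eq ht.ne']
  ring

lemma integral_exp_neg_sq_div_add_mul (ht : 0 < t) :
    ∫ z, exp (-(x + z)^2 / (2*t) + φ * z) = sqrt (2*π*t) * exp (-φ*x + t*φ^2/2) := by
  simp_rw [exp_neg_sq_div_add_mul_eq ht.ne']
  rw [integral_mul_const, integral_sub_right_eq_self (fun z => exp (-(1/(2*t)) * z^2)),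
    integral_gaussian]
  congr 2
  field_simp

lemma tendsto_exp_neg_sq_div_add_mul_atTop (ht : 0 < t) :
    Tendsto (fun z => exp (-(x + z)^2 / (2*t) + φ * z)) atTop (𝓝 0) := by
  simp_rw [exp_neg_sq_div_add_mul_eq ht.ne']
  have h : Tendsto (fun z => -(1/(2*t)) * (z - (t*φ - x))^2) atTop atBot :=
    ((tendsto_pow_atTop two_ne_zero).comp (tendsto_atTop_add_const_right _ _ tendsto_id))
      |>.const_mul_atTop_of_neg (by simp [ht])
  simpa using (tendsto_exp_atBot.comp h).mul_const (exp (-φ*x + t*φ^2/2))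

lemma integral_Iic_exp_neg_sq_div_add_mul :
    ∫ z in Iic 0, exp (-(x + z)^2 / (2*t) + φ * z)
      = ∫ z in Ioi 0, exp (-(x - z)^2 / (2*t) - φ * z) := by
  rw [← neg_zero, ← integral_comp_neg_Iic]
  simp only [sub_neg_eq_add, mul_neg, neg_zero]

lemma integral_Ioi_exp_neg_sq_div_add_mul (ht : 0 < t) :
    ∫ z in Ioi 0, exp (-(x + z)^2 / (2*t) + φ * z)
      = sqrt (2*π*t) * exp (-φ*x + t*φ^2/2)
        - ∫ z in Ioi 0, exp (-(x - z)^2 / (2*t) - φ * z) := by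
  have hi := integrable_exp_neg_sq_div_add_mul (x := x) (φ := φ) ht
  rw [← integral_exp_neg_sq_div_add_mul ht,
    ← intervalIntegral.integral_Iic_add_Ioi (b := 0) hi.integrableOn hi.integrableOn,
    integral_Iic_exp_neg_sq_div_add_mul]
  ring

lemma hasDerivAt_neg_mul_exp_neg_sq_div_add_mul (ht : t ≠ 0) (z : ℝ) :
    HasDerivAt (fun z => -t * exp (-(x + z)^2 / (2*t) + φ * z))
      ((x + z) * exp (-(x + z)^2 / (2*t) + φ * z)
        - t * φ * exp (-(x + z)^2 / (2*t) + φ * z)) z := by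
  have hsq : HasDerivAt (fun z => (x + z)^2) (2 * (x + z)) z := by
    simpa using ((hasDerivAt_id z).const_add x).fun_pow 2
  have hexp := (((hsq.fun_neg.div_const (2*t)).fun_add
    ((hasDerivAt_id' z).const_mul φ)).exp).const_mul (-t)
  refine hexp.congr_deriv ?_
  field_simp
  ring

lemma integral_Ioi_add_mul_exp_neg_sq_div_add_mul (ht : 0 < t) :
    ∫ z in Ioi 0, (x + z) * exp (-(x + z)^2 / (2*t) + φ * z)
      = t * exp (-x^2 / (2*t)) + t * φ * ∫ z in Ioi 0, exp (-(x + z)^2 / (2*t) + φ * z) := by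
  have hG := integrable_exp_neg_sq_div_add_mul (x := x) (φ := φ) ht
  have hM := integrable_add_mul_exp_neg_sq_div_add_mul (x := x) (φ := φ) ht
  have hftc := integral_Ioi_of_hasDerivAt_of_tendsto' (a := 0)
    (fun z _ => hasDerivAt_neg_mul_exp_neg_sq_div_add_mul ht.ne' z)
    (hM.sub (hG.const_mul _)).integrableOn
    (by simpa using (tendsto_exp_neg_sq_div_add_mul_atTop ht).const_mul (-t))
  rw [integral_sub hM.integrableOn (hG.const_mul _).integrableOn, integral_const_mul] at hftc
  simp only [add_zero, mul_zero, zero_sub, neg_mul, neg_neg] at hftc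
  linarith

lemma sqrt_two_div_pi_mul_pow_three_mul (ht : 0 < t) :
    sqrt (2 / (π * t^3)) * t = sqrt (2 / (π * t)) := by
  rw [← sqrt_sq ht.le, ← sqrt_mul (by positivity), sqrt_sq ht.le]
  congr 1
  field_simp

lemma sqrt_two_div_pi_mul_mul_sqrt (ht : 0 < t) :
    sqrt (2 / (π * t)) * sqrt (2 * π * t) = 2 := by
  rw [← sqrt_mul (by positivity), show 2 / (π * t) * (2 * π * t) = 2^2 by field_simp,
    sqrt_sq zero_le_two]

theorem sqrt_mul_integral_Ioi_add_mul_exp_neg_sq_div_add_mul (ht : 0 < t) :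
    sqrt (2 / (π * t^3)) * (∫ z in Ioi 0, (x + z) * exp (-(x + z)^2 / (2*t) + φ * z))
      = sqrt (2 / (π * t)) * exp (-x^2 / (2*t)) + 2 * φ * exp (-φ * x + t * φ^2 / 2)
        - φ * sqrt (2 / (π * t)) * ∫ z in Ioi 0, exp (-(x - z)^2 / (2*t) - φ * z) := by
  rw [integral_Ioi_add_mul_exp_neg_sq_div_add_mul ht, integral_Ioi_exp_neg_sq_div_add_mul ht]
  linear_combination
    (exp (-x^2 / (2*t)) + φ * sqrt (2*π*t) * exp (-φ*x + t*φ^2/2)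
      - φ * ∫ z in Ioi 0, exp (-(x - z)^2 / (2*t) - φ * z)) * sqrt_two_div_pi_mul_pow_three_mul ht
    + φ * exp (-φ*x + t*φ^2/2) * sqrt_two_div_pi_mul_mul_sqrt ht

lemma integral_Ioi_exp_neg_sq_div_sub_mul_nonneg :
    0 ≤ ∫ z in Ioi 0, exp (-(x - z)^2 / (2*t) - φ * z) :=
  setIntegral_nonneg measurableSet_Ioi fun _ _ => (exp_pos _).le

lemma integral_Ioi_exp_neg_sq_div_sub_mul_le (hφ : 0 < φ) (ht : 0 < t) :
    ∫ z in Ioi 0, exp (-(x - z)^2 / (2*t) - φ * z) ≤ 1 / φ := by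
  have hexp : ∫ z in Ioi 0, exp (-φ * z) = 1 / φ := by
    simpa [div_neg, neg_div] using integral_exp_mul_Ioi (neg_lt_zero.2 hφ) 0
  rw [← hexp]
  refine integral_mono_of_nonneg (ae_of_all _ fun _ => (exp_pos _).le)
    (exp_neg_integrableOn_Ioi 0 hφ) ((ae_restrict_iff' measurableSet_Ioi).2 (ae_of_all _ ?_))
  intro z _
  have : 0 ≤ (x - z)^2 / (2*t) := by positivity
  exact exp_le_exp.2 (by rw [neg_div]; linarith)

lemma exp_neg_sq_div_le_one (ht : 0 < t) : exp (-x^2 / (2*t)) ≤ 1 :=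
  exp_le_one_iff.2 (div_nonpos_of_nonpos_of_nonneg (neg_nonpos.2 (sq_nonneg x)) (by positivity))

theorem sqrt_mul_integral_Ioi_add_mul_exp_neg_sq_div_add_mul_le (hφ : 0 ≤ φ) (ht : 0 < t) :
    sqrt (2 / (π * t^3)) * (∫ z in Ioi 0, (x + z) * exp (-(x + z)^2 / (2*t) + φ * z))
      ≤ sqrt (2 / (π * t)) + 2 * φ * exp (-φ * x + t * φ^2 / 2) := by
  rw [sqrt_mul_integral_Ioi_add_mul_exp_neg_sq_div_add_mul ht]
  have hgauss : sqrt (2 / (π * t)) * exp (-x^2 / (2*t)) ≤ sqrt (2 / (π * t)) :=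
    mul_le_of_le_one_right (sqrt_nonneg _) (exp_neg_sq_div_le_one ht)
  have hK := integral_Ioi_exp_neg_sq_div_sub_mul_nonneg (x := x) (t := t) (φ := φ)
  have hreflected : 0 ≤ φ * sqrt (2 / (π * t)) *
      ∫ z in Ioi 0, exp (-(x - z)^2 / (2*t) - φ * z) := by positivity
  linarith

lemma abs_sqrt_mul_integral_Ioi_add_mul_exp_neg_sq_div_add_mul_sub_le (hφ : 0 < φ) (ht : 0 < t) :
    |sqrt (2 / (π * t^3)) * (∫ z in Ioi 0, (x + z) * exp (-(x + z)^2 / (2*t) + φ * z))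
        - (sqrt (2 / (π * t)) + 2 * φ * exp (-φ * x + t * φ^2 / 2))|
      ≤ 2 * sqrt (2 / (π * t)) := by
  rw [sqrt_mul_integral_Ioi_add_mul_exp_neg_sq_div_add_mul ht, abs_le]
  set K := ∫ z in Ioi 0, exp (-(x - z)^2 / (2*t) - φ * z)
  have hs := sqrt_nonneg (2 / (π * t))
  have hφK : φ * K ≤ 1 := by
    rw [← le_div_iff₀' hφ]
    exact integral_Ioi_exp_neg_sq_div_sub_mul_le hφ ht
  have hreflected : φ * sqrt (2 / (π * t)) * K ≤ sqrt (2 / (π * t)) := by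
    rw [mul_right_comm]
    exact mul_le_of_le_one_left hs hφK
  have hK : 0 ≤ K := integral_Ioi_exp_neg_sq_div_sub_mul_nonneg
  have hreflected_nonneg : 0 ≤ φ * sqrt (2 / (π * t)) * K := by positivity
  have hgauss : 0 ≤ sqrt (2 / (π * t)) * exp (-x^2 / (2*t)) := by positivity
  have hgauss' : sqrt (2 / (π * t)) * exp (-x^2 / (2*t)) ≤ sqrt (2 / (π * t)) :=
    mul_le_of_le_one_right hs (exp_neg_sq_div_le_one ht)
  constructor <;> linarith

lemma tendsto_sqrt_two_div_pi_mul_atTop : Tendsto (fun t => sqrt (2 / (π * t))) atTop (𝓝 0) := by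
  have h := ((tendsto_const_nhds (x := (2 : ℝ))).div_atTop
    (tendsto_id.const_mul_atTop pi_pos)).sqrt
  rwa [sqrt_zero] at h

lemma tendsto_sqrt_add_mul_exp_atTop (hφ : 0 < φ) :
    Tendsto (fun t => sqrt (2 / (π * t)) + 2 * φ * exp (-φ * x + t * φ^2 / 2)) atTop atTop := by
  have h : Tendsto (fun t => -φ * x + t * φ^2 / 2) atTop atTop :=
    tendsto_atTop_add_const_left _ _
      ((tendsto_id.atTop_mul_const (by positivity)).atTop_div_const two_pos)
  refine tendsto_atTop_mono (fun t => le_add_of_nonneg_left (sqrt_nonneg _)) ?_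
  exact (tendsto_exp_atTop.comp h).const_mul_atTop (by positivity)

theorem isEquivalent_sqrt_mul_integral_Ioi_add_mul_exp_neg_sq_div_add_mul (hφ : 0 < φ) :
    (fun t => sqrt (2 / (π * t^3)) *
        ∫ z in Ioi 0, (x + z) * exp (-(x + z)^2 / (2*t) + φ * z))
      ~[atTop] fun t => sqrt (2 / (π * t)) + 2 * φ * exp (-φ * x + t * φ^2 / 2) := by
  refine IsBigO.trans_isLittleO (g := fun t => sqrt (2 / (π * t))) ?_ ?_
  · refine IsBigO.of_bound 2 <| (eventually_gt_atTop 0).mono fun t ht => ?_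
    rw [Pi.sub_apply, norm_eq_abs, norm_eq_abs, abs_of_nonneg (sqrt_nonneg _)]
    exact abs_sqrt_mul_integral_Ioi_add_mul_exp_neg_sq_div_add_mul_sub_le hφ ht
  · exact (tendsto_sqrt_two_div_pi_mul_atTop.isBigO_one ℝ).trans_isLittleO <|
      (isLittleO_one_left_iff ℝ).2
        (tendsto_norm_atTop_atTop.comp (tendsto_sqrt_add_mul_exp_atTop hφ))

end

theorem stmt_12_general (φ x : ℝ) (hφ : 0 < φ) :
    (∀ t : ℝ, 0 < t →
      Real.sqrt (2 / (π * t^3)) *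
          (∫ z in Ioi (0:ℝ), (x + z) * Real.exp (-(x + z)^2 / (2*t) + φ * z))
        = Real.sqrt (2 / (π * t)) * Real.exp (-x^2 / (2*t))
            + 2 * φ * Real.exp (-φ * x + t * φ^2 / 2)
            - φ * Real.sqrt (2 / (π * t)) *
                ∫ z in Ioi (0:ℝ), Real.exp (-(x - z)^2 / (2*t) - φ * z)) ∧
    (∀ t : ℝ, 0 < t →
      (∫ z in Ioi (0:ℝ), Real.exp (-(x - z)^2 / (2*t) - φ * z)) ≤ 1 / φ) ∧
    (∀ t : ℝ, 0 < t →
      Real.sqrt (2 / (π * t^3)) *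
          (∫ z in Ioi (0:ℝ), (x + z) * Real.exp (-(x + z)^2 / (2*t) + φ * z))
        ≤ Real.sqrt (2 / (π * t)) + 2 * φ * Real.exp (-φ * x + t * φ^2 / 2)) ∧
    Asymptotics.IsEquivalent atTop
      (fun t => Real.sqrt (2 / (π * t^3)) *
          ∫ z in Ioi (0:ℝ), (x + z) * Real.exp (-(x + z)^2 / (2*t) + φ * z))
      (fun t => Real.sqrt (2 / (π * t)) + 2 * φ * Real.exp (-φ * x + t * φ^2 / 2)) :=
  ⟨fun _ ht => sqrt_mul_integral_Ioi_add_mul_exp_neg_sq_div_add_mul ht,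
    fun _ ht => integral_Ioi_exp_neg_sq_div_sub_mul_le hφ ht,
    fun _ ht => sqrt_mul_integral_Ioi_add_mul_exp_neg_sq_div_add_mul_le hφ.le ht,
    isEquivalent_sqrt_mul_integral_Ioi_add_mul_exp_neg_sq_div_add_mul hφ⟩

/-- For any `φ > 0`, `x ≥ 0` and `t > 0`,
`√(2/(πt³)) ∫_0^∞ (x+z) exp(-(x+z)²/(2t) + φz) dz
  = √(2/(πt)) e^{-x²/(2t)} + 2φ e^{-φx + tφ²/2} - φ √(2/(πt)) ∫_0^∞ exp(-(x-z)²/(2t) - φz) dz`,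
the last integral is bounded by `1/φ`; hence the left side is at most and asymptotically
equivalent to `√(2/(πt)) + 2φ e^{-φx + tφ²/2}` as `t → ∞`. -/
theorem stmt_12 (φ x : ℝ) (hφ : 0 < φ) (hx : 0 ≤ x) :
    (∀ t : ℝ, 0 < t →
      Real.sqrt (2 / (π * t^3)) *
          (∫ z in Ioi (0:ℝ), (x + z) * Real.exp (-(x + z)^2 / (2*t) + φ * z))
        = Real.sqrt (2 / (π * t)) * Real.exp (-x^2 / (2*t))
            + 2 * φ * Real.exp (-φ * x + t * φ^2 / 2)
            - φ * Real.sqrt (2 / (π * t)) *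
                ∫ z in Ioi (0:ℝ), Real.exp (-(x - z)^2 / (2*t) - φ * z)) ∧
    (∀ t : ℝ, 0 < t →
      (∫ z in Ioi (0:ℝ), Real.exp (-(x - z)^2 / (2*t) - φ * z)) ≤ 1 / φ) ∧
    (∀ t : ℝ, 0 < t →
      Real.sqrt (2 / (π * t^3)) *
          (∫ z in Ioi (0:ℝ), (x + z) * Real.exp (-(x + z)^2 / (2*t) + φ * z))
        ≤ Real.sqrt (2 / (π * t)) + 2 * φ * Real.exp (-φ * x + t * φ^2 / 2)) ∧
    Asymptotics.IsEquivalent atTop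
      (fun t => Real.sqrt (2 / (π * t^3)) *
          ∫ z in Ioi (0:ℝ), (x + z) * Real.exp (-(x + z)^2 / (2*t) + φ * z))
      (fun t => Real.sqrt (2 / (π * t)) + 2 * φ * Real.exp (-φ * x + t * φ^2 / 2)) :=
  stmt_12_general φ x hφ
end
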